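/- The stabilizer of the conic C is transitive on the external points of C: for any vectors v, w ∈ K³ such that −Q(v) and −Q(w) are both nonzero squares in K, there exist a similitude A of Q and a nonzero scalar λ ∈ K with A·v = λ·w. -/

import Mathlib

/-!
Both `v` and `w` can be moved onto the line through `e₂ = (0,0,1)` by isometries of `Q`, hence
onto each other. The isometries used are the unipotent ones fixing the isotropic points `e₀` and
`e₁` of the conic. For `v` with `Q(v) = -s²`, `s ≠ 0`: if `v₀ ≠ 0`, one fixing `e₁` clears `v₂`,
after which one fixing `e₀` clears `v₀` and makes the last coordinate `s`; this is where `-Q(v)`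
being a square is used. Once `v₀ = 0 ≠ v₂`, a last one fixing `e₁` clears `v₁`, which requires
dividing by `2`.
-/

/-- The quadratic form `Q(x₀,x₁,x₂) = x₀x₁ - x₂²` on `K³`. -/
def quadForm (K : Type*) [CommRing K] (v : Fin 3 → K) : K := v 0 * v 1 - v 2 ^ 2

/-- A matrix `A ∈ GL(3,K)` is a similitude of `Q` if `Q(A·x) = c·Q(x)` for some `c ∈ K*`. -/
def IsSimilitude (K : Type*) [CommRing K] (A : Matrix (Fin 3) (Fin 3) K) : Prop :=
  IsUnit A ∧ ∃ c : K, c ≠ 0 ∧ ∀ x : Fin 3 → K, quadForm K (A.mulVec x) = c * quadForm K x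

open Matrix

section CommRing

variable {K : Type*} [CommRing K]

theorem isSimilitude_of_det_eq_one {A : Matrix (Fin 3) (Fin 3) K} [Nontrivial K]
    (hdet : A.det = 1) (hQ : ∀ x, quadForm K (A *ᵥ x) = quadForm K x) : IsSimilitude K A :=
  ⟨(isUnit_iff_isUnit_det A).mpr (hdet ▸ isUnit_one), 1, one_ne_zero,
    fun x => (hQ x).trans (one_mul _).symm⟩

/-- Induced by `(a, b) ↦ (a, t a + b)` on the parametrization `(a², b², a b)` of the conic. -/
def unipotentFixingE₁ (t : K) : Matrix (Fin 3) (Fin 3) K := !![1, 0, 0; t ^ 2, 1, 2 * t; t, 0, 1]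

/-- Induced by `(a, b) ↦ (a + r b, b)` on the parametrization `(a², b², a b)` of the conic. -/
def unipotentFixingE₀ (r : K) : Matrix (Fin 3) (Fin 3) K := !![1, r ^ 2, 2 * r; 0, 1, 0; 0, r, 1]

theorem unipotentFixingE₁_mulVec (t : K) (x : Fin 3 → K) :
    unipotentFixingE₁ t *ᵥ x = ![x 0, t ^ 2 * x 0 + x 1 + 2 * t * x 2, t * x 0 + x 2] := by
  ext i
  fin_cases i <;> simp [unipotentFixingE₁, mulVec, dotProduct, Fin.sum_univ_three]

theorem unipotentFixingE₀_mulVec (r : K) (x : Fin 3 → K) :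
    unipotentFixingE₀ r *ᵥ x = ![x 0 + r ^ 2 * x 1 + 2 * r * x 2, x 1, r * x 1 + x 2] := by
  ext i
  fin_cases i <;> simp [unipotentFixingE₀, mulVec, dotProduct, Fin.sum_univ_three]

theorem isSimilitude_unipotentFixingE₁ [Nontrivial K] (t : K) :
    IsSimilitude K (unipotentFixingE₁ t) :=
  isSimilitude_of_det_eq_one (by simp [unipotentFixingE₁, det_fin_three])
    fun x => by
      simp only [unipotentFixingE₁_mulVec, quadForm, cons_val_zero, cons_val_one, cons_val]
      ring

theorem isSimilitude_unipotentFixingE₀ [Nontrivial K] (r : K) :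
    IsSimilitude K (unipotentFixingE₀ r) :=
  isSimilitude_of_det_eq_one (by simp [unipotentFixingE₀, det_fin_three])
    fun x => by
      simp only [unipotentFixingE₀_mulVec, quadForm, cons_val_zero, cons_val_one, cons_val]
      ring

end CommRing

section Field

variable {K : Type*} [Field K]

theorem IsSimilitude.mul {A B : Matrix (Fin 3) (Fin 3) K} (hA : IsSimilitude K A)
    (hB : IsSimilitude K B) : IsSimilitude K (A * B) := by
  obtain ⟨hAu, c, hc, hcQ⟩ := hA
  obtain ⟨hBu, d, hd, hdQ⟩ := hB
  refine ⟨hAu.mul hBu, c * d, mul_ne_zero hc hd, fun x => ?_⟩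
  rw [← mulVec_mulVec, hcQ, hdQ, mul_assoc]

theorem IsSimilitude.inv {A : Matrix (Fin 3) (Fin 3) K} (hA : IsSimilitude K A) :
    IsSimilitude K A⁻¹ := by
  obtain ⟨hAu, c, hc, hcQ⟩ := hA
  refine ⟨isUnit_nonsing_inv_iff.mpr hAu, c⁻¹, inv_ne_zero hc, fun x => ?_⟩
  have h := hcQ (A⁻¹ *ᵥ x)
  rw [mulVec_mulVec, mul_nonsing_inv A ((isUnit_iff_isUnit_det A).mp hAu), one_mulVec] at h
  rw [h, inv_mul_cancel_left₀ hc]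

theorem unipotentFixingE₁_mulVec_of_zero (h2 : (2 : K) ≠ 0) {v : Fin 3 → K} (h0 : v 0 = 0)
    (h2v : v 2 ≠ 0) : unipotentFixingE₁ (-v 1 / (2 * v 2)) *ᵥ v = v 2 • ![0, 0, 1] := by
  rw [unipotentFixingE₁_mulVec, h0]
  ext i
  fin_cases i <;> simp only [Fin.zero_eta, Fin.mk_one, Fin.reduceFinMk, cons_val_zero, cons_val_one,
    cons_val, Pi.smul_apply, smul_eq_mul] <;> field_simp <;> ring

theorem unipotentFixingE₁_mulVec_of_ne_zero {v : Fin 3 → K} (h0 : v 0 ≠ 0) :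
    unipotentFixingE₁ (-v 2 / v 0) *ᵥ v = ![v 0, quadForm K v / v 0, 0] := by
  rw [unipotentFixingE₁_mulVec]
  ext i
  fin_cases i <;> simp only [Fin.zero_eta, Fin.mk_one, Fin.reduceFinMk, cons_val_zero, cons_val_one,
    cons_val, quadForm] <;> field_simp <;> ring

theorem unipotentFixingE₀_neg_div_mulVec {a s : K} (ha : a ≠ 0) (hs : s ≠ 0) :
    unipotentFixingE₀ (-a / s) *ᵥ ![a, -s ^ 2 / a, 0] = ![0, -s ^ 2 / a, s] := by
  rw [unipotentFixingE₀_mulVec]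
  ext i
  fin_cases i <;> simp only [Fin.zero_eta, Fin.mk_one, Fin.reduceFinMk, cons_val_zero, cons_val_one,
    cons_val] <;> field_simp <;> ring

theorem exists_similitude_mulVec_eq_smul_e₂_of_zero (h2 : (2 : K) ≠ 0) {v : Fin 3 → K}
    (h0 : v 0 = 0) (h2v : v 2 ≠ 0) :
    ∃ A : Matrix (Fin 3) (Fin 3) K, IsSimilitude K A ∧
      ∃ μ : K, μ ≠ 0 ∧ A *ᵥ v = μ • ![0, 0, 1] :=
  ⟨_, isSimilitude_unipotentFixingE₁ _, v 2, h2v, unipotentFixingE₁_mulVec_of_zero h2 h0 h2v⟩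

theorem exists_similitude_mulVec_eq_smul_e₂ (h2 : (2 : K) ≠ 0) {v : Fin 3 → K} {s : K}
    (hs : s ≠ 0) (hQ : quadForm K v = -s ^ 2) :
    ∃ A : Matrix (Fin 3) (Fin 3) K, IsSimilitude K A ∧
      ∃ μ : K, μ ≠ 0 ∧ A *ᵥ v = μ • ![0, 0, 1] := by
  by_cases h0 : v 0 = 0
  · refine exists_similitude_mulVec_eq_smul_e₂_of_zero h2 h0 fun h2v => hs ?_
    simpa [quadForm, h0, h2v] using hQ
  · obtain ⟨A, hA, μ, hμ, hAu⟩ :=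
      exists_similitude_mulVec_eq_smul_e₂_of_zero h2 (v := ![0, -s ^ 2 / v 0, s]) rfl hs
    have hv : (unipotentFixingE₀ (-v 0 / s) * unipotentFixingE₁ (-v 2 / v 0)) *ᵥ v =
        ![0, -s ^ 2 / v 0, s] := by
      rw [← mulVec_mulVec, unipotentFixingE₁_mulVec_of_ne_zero h0, hQ,
        unipotentFixingE₀_neg_div_mulVec h0 hs]
    exact ⟨A * _, hA.mul ((isSimilitude_unipotentFixingE₀ _).mul
      (isSimilitude_unipotentFixingE₁ _)), μ, hμ, by rw [← mulVec_mulVec, hv, hAu]⟩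

theorem two_ne_zero_of_odd_card [Fintype K] (hodd : Odd (Fintype.card K)) : (2 : K) ≠ 0 :=
  Ring.two_ne_zero fun h => by
    have := FiniteField.even_card_of_char_two h
    rw [Nat.odd_iff.mp hodd] at this
    exact one_ne_zero this

end Field

/-- The stabilizer of the conic `C` is transitive on the external points of `C`. -/
theorem similitudes_transitive_on_external_points
    (K : Type*) [Field K] [Fintype K] (hodd : Odd (Fintype.card K))
    (v w : Fin 3 → K)
    (hv0 : -(quadForm K v) ≠ 0) (hv : IsSquare (-(quadForm K v)))
    (hw0 : -(quadForm K w) ≠ 0) (hw : IsSquare (-(quadForm K w))) :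
    ∃ A : Matrix (Fin 3) (Fin 3) K, IsSimilitude K A ∧
      ∃ lam : K, lam ≠ 0 ∧ A.mulVec v = lam • w := by
  have h2 := two_ne_zero_of_odd_card hodd
  obtain ⟨s, hs⟩ := hv
  obtain ⟨t, ht⟩ := hw
  obtain ⟨A, hA, μ, hμ, hAv⟩ := exists_similitude_mulVec_eq_smul_e₂ h2 (s := s)
    (fun h => hv0 (by rw [hs, h, mul_zero])) (by linear_combination -hs)
  obtain ⟨B, hB, ν, hν, hBw⟩ := exists_similitude_mulVec_eq_smul_e₂ h2 (s := t)
    (fun h => hw0 (by rw [ht, h, mul_zero])) (by linear_combination -ht)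
  have hBw' : B *ᵥ ((μ / ν) • w) = A *ᵥ v := by
    rw [mulVec_smul, hBw, smul_smul, div_mul_cancel₀ μ hν, hAv]
  refine ⟨B⁻¹ * A, hB.inv.mul hA, μ / ν, div_ne_zero hμ hν, ?_⟩
  rw [← mulVec_mulVec, ← hBw', mulVec_mulVec,
    nonsing_inv_mul B ((isUnit_iff_isUnit_det B).mp hB.1), one_mulVec]
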